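/- arXiv:1902.10789 — 4 statements merged into one kernel-verified Lean document; each statement's English description precedes it below -/
import Mathlib

section
/- For every integer n ≥ 1, the set Γ(πⁿ) = {g ∈ GL₂(O) : the (2,1)-entry of g lies in πⁿO} is a subgroup of GL₂(O), and its index in GL₂(O) equals qⁿ⁻¹(q+1). -/
/-!
The coset `g Γ₀(πⁿ)` is determined by the first column of `g` read as a point of `ℙ¹(O/πⁿ)`:
`g Γ₀ = h Γ₀` iff `g₀₀ h₁₀ - g₁₀ h₀₀ ∈ πⁿO`. Every point of `ℙ¹(O/πⁿ)` is uniquely `(1 : r)` with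
`r ∈ O/πⁿ` or `(π t : 1)` with `t ∈ O/πⁿ⁻¹`, so the index is `qⁿ + qⁿ⁻¹`.
-/

open Matrix IsLocalRing

lemma Nat.card_eq_of_surjective_of_eq_iff {α β γ : Type*} {f : α → β} {g : α → γ}
    (hf : Function.Surjective f) (hg : Function.Surjective g)
    (hfg : ∀ x y, f x = f y ↔ g x = g y) : Nat.card β = Nat.card γ := by
  refine Nat.card_congr (Equiv.ofBijective (g ∘ Function.surjInv hf) ⟨?_, ?_⟩)
  · intro b b' h
    rwa [Function.comp_apply, Function.comp_apply, ← hfg, Function.surjInv_eq hf,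
      Function.surjInv_eq hf] at h
  · intro c
    obtain ⟨a, rfl⟩ := hg c
    exact ⟨f a, (hfg _ _).mp (Function.surjInv_eq hf (f a))⟩

namespace Ideal

variable {R : Type*} [CommRing R] {π : R}

lemma mul_mem_span_singleton_pow_succ_iff [IsDomain R] (hπ : π ≠ 0) (k : ℕ) (x : R) :
    π * x ∈ span {π ^ (k + 1)} ↔ x ∈ span {π ^ k} := by
  simp only [mem_span_singleton, pow_succ', mul_dvd_mul_iff_left hπ]

lemma one_sub_mul_notMem_span_singleton_pow_succ (hπ : ¬IsUnit π) (k : ℕ) (x : R) :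
    1 - π * x ∉ span {π ^ (k + 1)} := by
  rw [mem_span_singleton]
  intro h
  have : π ∣ 1 := by
    simpa using dvd_add ((dvd_pow_self π k.succ_ne_zero).trans h) (dvd_mul_right π x)
  exact hπ (isUnit_of_dvd_one this)

end Ideal

namespace Matrix.GeneralLinearGroup

variable {R : Type*} [CommRing R]

lemma det_mul_inv_mul_apply_one_zero (g h : GL (Fin 2) R) :
    (g : Matrix (Fin 2) (Fin 2) R).det * ((g⁻¹ * h : GL (Fin 2) R) : Matrix (Fin 2) (Fin 2) R) 1 0 =
      g 0 0 * h 1 0 - g 1 0 * h 0 0 := by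
  set k := g⁻¹ * h
  have hgk : (g : Matrix (Fin 2) (Fin 2) R) * k = h := by
    rw [← coe_mul, mul_inv_cancel_left]
  rw [← hgk, mul_apply, mul_apply, Fin.sum_univ_two, Fin.sum_univ_two, det_fin_two]
  ring

lemma inv_mul_apply_one_zero_mem_iff (I : Ideal R) (g h : GL (Fin 2) R) :
    ((g⁻¹ * h : GL (Fin 2) R) : Matrix (Fin 2) (Fin 2) R) 1 0 ∈ I ↔
      g 0 0 * h 1 0 - g 1 0 * h 0 0 ∈ I := by
  rw [← det_mul_inv_mul_apply_one_zero, Ideal.unit_mul_mem_iff_mem _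
    ((isUnit_iff_isUnit_det _).mp g.isUnit)]

/-- The congruence subgroup `Γ₀(I)`, written `Γ(a)` in the statement when `I = aO`. -/
def gammaZero (I : Ideal R) : Subgroup (GL (Fin 2) R) where
  carrier := {g | (g : Matrix (Fin 2) (Fin 2) R) 1 0 ∈ I}
  one_mem' := by simp
  mul_mem' {g h} hg hh := by
    simp only [Set.mem_ofPred_eq, coe_mul, mul_apply, Fin.sum_univ_two]
    exact I.add_mem (I.mul_mem_right _ hg) (I.mul_mem_left _ hh)
  inv_mem' {g} hg := by
    simpa using (inv_mul_apply_one_zero_mem_iff I g 1).mpr (by simpa using hg)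

lemma mk_eq_mk_gammaZero_iff (I : Ideal R) (g h : GL (Fin 2) R) :
    (g : GL (Fin 2) R ⧸ gammaZero I) = h ↔ g 0 0 * h 1 0 - g 1 0 * h 0 0 ∈ I :=
  QuotientGroup.eq.trans (inv_mul_apply_one_zero_mem_iff I g h)

lemma isUnit_apply_zero_zero_or_isUnit_apply_one_zero [IsLocalRing R] (g : GL (Fin 2) R) :
    IsUnit (g 0 0) ∨ IsUnit (g 1 0) := by
  have hdet := (isUnit_iff_isUnit_det _).mp g.isUnit
  rw [det_fin_two, sub_eq_add_neg] at hdet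
  refine (isUnit_or_isUnit_of_isUnit_add hdet).imp isUnit_of_mul_isUnit_left fun h ↦ ?_
  exact isUnit_of_mul_isUnit_right (IsUnit.neg_iff _ |>.mp h)

/-- Coset representatives for `Γ₀(πⁿ)`: their first columns `(1, r)` and `(π t, 1)` run through
the two affine charts of `ℙ¹(O/πⁿ)`. -/
def gammaZeroCosetRep (π : R) : R ⊕ R → GL (Fin 2) R
  | .inl r => SpecialLinearGroup.toGL ⟨!![1, 0; r, 1], by simp [det_fin_two]⟩
  | .inr t => SpecialLinearGroup.toGL ⟨!![π * t, -1; 1, 0], by simp [det_fin_two]⟩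

@[simp]
lemma coe_gammaZeroCosetRep_inl (π r : R) :
    (gammaZeroCosetRep π (.inl r) : Matrix (Fin 2) (Fin 2) R) = !![1, 0; r, 1] :=
  rfl

@[simp]
lemma coe_gammaZeroCosetRep_inr (π t : R) :
    (gammaZeroCosetRep π (.inr t) : Matrix (Fin 2) (Fin 2) R) = !![π * t, -1; 1, 0] :=
  rfl

lemma mk_gammaZeroCosetRep_eq_iff [IsDomain R] {π : R} (hπ : Irreducible π) (k : ℕ)
    (x y : R ⊕ R) :
    (gammaZeroCosetRep π x : GL (Fin 2) R ⧸ gammaZero (Ideal.span {π ^ (k + 1)})) =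
        gammaZeroCosetRep π y ↔
      Sum.map (Ideal.Quotient.mk (Ideal.span {π ^ (k + 1)}))
          (Ideal.Quotient.mk (Ideal.span {π ^ k})) x =
        Sum.map (Ideal.Quotient.mk _) (Ideal.Quotient.mk _) y := by
  rw [mk_eq_mk_gammaZero_iff]
  rcases x with r | t <;> rcases y with s | t' <;>
    simp only [Sum.map_inl, Sum.map_inr, Sum.inl.injEq, Sum.inr.injEq, reduceCtorEq,
      Ideal.Quotient.eq, coe_gammaZeroCosetRep_inl, coe_gammaZeroCosetRep_inr, of_apply, cons_val',
      cons_val_zero, cons_val_one, empty_val', cons_val_fin_one, iff_false]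
  · rw [mul_one, one_mul, sub_mem_comm_iff]
  · rw [mul_one, mul_left_comm]
    exact Ideal.one_sub_mul_notMem_span_singleton_pow_succ hπ.not_isUnit k _
  · rw [← neg_sub, neg_mem_iff, one_mul, mul_assoc]
    exact Ideal.one_sub_mul_notMem_span_singleton_pow_succ hπ.not_isUnit k _
  · rw [mul_one, one_mul, ← mul_sub]
    exact Ideal.mul_mem_span_singleton_pow_succ_iff hπ.ne_zero k _

lemma surjective_mk_gammaZeroCosetRep [IsLocalRing R] {π : R} (hπ : maximalIdeal R = Ideal.span {π})
    (I : Ideal R) :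
    Function.Surjective fun x ↦ (gammaZeroCosetRep π x : GL (Fin 2) R ⧸ gammaZero I) := by
  intro y
  induction y using QuotientGroup.induction_on with | H g => ?_
  by_cases ha : IsUnit (g 0 0)
  · obtain ⟨u, hu⟩ := ha
    refine ⟨.inl (g 1 0 * ↑u⁻¹), ?_⟩
    simp [mk_eq_mk_gammaZero_iff, ← hu]
  · obtain ⟨v, hv⟩ := (isUnit_apply_zero_zero_or_isUnit_apply_one_zero g).resolve_left ha
    obtain ⟨s, hs⟩ : π ∣ g 0 0 := by
      rwa [← Ideal.mem_span_singleton, ← hπ, mem_maximalIdeal, mem_nonunits_iff]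
    refine ⟨.inr (s * ↑v⁻¹), ?_⟩
    simp [mk_eq_mk_gammaZero_iff, ← hv, hs, mul_assoc]

end Matrix.GeneralLinearGroup

namespace IsDiscreteValuationRing

variable {O : Type*} [CommRing O] [IsDomain O] [IsDiscreteValuationRing O] {π : O}

lemma card_quotient_span_pow (hπ : Irreducible π) (k : ℕ) :
    Nat.card (O ⧸ Ideal.span {π ^ k}) = Nat.card (ResidueField O) ^ k := by
  rw [← Ideal.span_singleton_pow, ← hπ.maximalIdeal_eq, ← Submodule.cardQuot_apply,
    cardQuot_pow_of_prime (not_a_field O), Submodule.cardQuot_apply]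
  rfl

end IsDiscreteValuationRing

/-- Let `O` be a discrete valuation ring with uniformizer `π` whose residue
field is finite of cardinality `q`. For every integer `n ≥ 1`, the set
`Γ(πⁿ) = {g ∈ GL₂(O) : g 2 1 ∈ πⁿO}` is a subgroup of `GL₂(O)` whose index equals
`qⁿ⁻¹ (q + 1)`. -/
theorem stmt0 (O : Type*) [CommRing O] [IsDomain O] [IsDiscreteValuationRing O]
    (π : O) (hπ : Irreducible π)
    (q : ℕ) [Finite (IsLocalRing.ResidueField O)]
    (hq : Nat.card (IsLocalRing.ResidueField O) = q)
    (n : ℕ) (hn : 1 ≤ n) :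
    ∃ Γ : Subgroup (GL (Fin 2) O),
      (Γ : Set (GL (Fin 2) O)) =
        {g : GL (Fin 2) O | (g : Matrix (Fin 2) (Fin 2) O) 1 0 ∈ Ideal.span {π ^ n}} ∧
      Γ.index = q ^ (n - 1) * (q + 1) := by
  obtain ⟨k, rfl⟩ : ∃ k, n = k + 1 := ⟨n - 1, by omega⟩
  refine ⟨GeneralLinearGroup.gammaZero (Ideal.span {π ^ (k + 1)}), rfl, ?_⟩
  have hcard (m : ℕ) : Nat.card (O ⧸ Ideal.span {π ^ m}) = q ^ m := by
    rw [IsDiscreteValuationRing.card_quotient_span_pow hπ, hq]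
  have hfinite (m : ℕ) : Finite (O ⧸ Ideal.span {π ^ m}) :=
    Nat.finite_of_card_ne_zero (by rw [hcard, ← hq]; exact pow_ne_zero _ Nat.card_pos.ne')
  rw [Subgroup.index, Nat.card_eq_of_surjective_of_eq_iff
      (GeneralLinearGroup.surjective_mk_gammaZeroCosetRep hπ.maximalIdeal_eq _)
      (Ideal.Quotient.mk_surjective.sumMap Ideal.Quotient.mk_surjective)
      (GeneralLinearGroup.mk_gammaZeroCosetRep_eq_iff hπ k),
    Nat.card_sum, hcard, hcard, Nat.add_sub_cancel, pow_succ]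
  ring
end

section
/- Assume n ∈ πᵘO, and assume either (i) u ≥ 1 and t ∈ m, or (ii) the reduction of X² − tX + n modulo m is irreducible over the residue field O/m. Then every g ∈ GL₂(O) whose (2,1)-entry lies in πᵘO factors uniquely as g = l·h, where l = [[1, 0], [c, d]] with c ∈ πᵘO and d ∈ O×, and h = [[a, b], [−nb, a + tb]] with a² + tab + nb² ∈ O×. (Equivalently: Γ(πᵘ) = Γ₀(πᵘ)·H with Γ₀(πᵘ) ∩ H trivial, where Γ₀(πᵘ) is the set of matrices [[1,0],[c,d]] ∈ GL₂(O) with c ∈ πᵘO, and H is the set of matrices [[a, b], [−nb, a + tb]] with a² + tab + nb² ∈ O×.) -/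
/-!
The matrices `h = [[a, b], [-n b, a + t b]]` represent multiplication in `O[X]/(X² - tX + n)`,
and `det h` is the norm form `a² + tab + nb²`. Left multiplication by `[[1, 0], [c, d]]` fixes
the top row, so `h` must be the one built from the top row `(a, b)` of `g`, and then `l = g h⁻¹`.
It remains to see that the norm form is a unit at the top row of `g`. Modulo `m` it vanishes
only at `a = 0` in case (i), where `t, n ∈ m`, and only at `a = b = 0` in case (ii), since a zero
with `b ≠ 0` gives the root `-a/b` of the irreducible quadratic. Either way `det g ∈ m`, using
`g₁₀ ∈ m` in case (i).
-/

open Polynomial IsLocalRing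

def normForm {R : Type*} [CommRing R] (t n a b : R) : R := a ^ 2 + t * a * b + n * b ^ 2

theorem eq_zero_of_normForm_eq_zero {k : Type*} [Field k] {t n a b : k}
    (hirr : Irreducible (X ^ 2 - C t * X + C n)) (h : normForm t n a b = 0) :
    a = 0 ∧ b = 0 := by
  unfold normForm at h
  by_cases hb : b = 0
  · subst hb
    exact ⟨by simpa using h, rfl⟩
  · have hroot : (X ^ 2 - C t * X + C n).IsRoot (-a / b) := by
      simp only [IsRoot, eval_add, eval_sub, eval_mul, eval_pow, eval_X, eval_C]
      field_simp
      linear_combination h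
    have hdeg := degree_eq_one_of_irreducible_of_root hirr hroot
    have hdeg2 : (X ^ 2 - C t * X + C n : k[X]).degree = 2 := by compute_degree!
    rw [hdeg2] at hdeg
    exact absurd hdeg (by decide)

section LocalRing

variable {O : Type*} [CommRing O] [IsLocalRing O] {t n a b c d : O}

theorem isUnit_normForm_of_mem_maximalIdeal (ht : t ∈ maximalIdeal O) (hn : n ∈ maximalIdeal O)
    (hc : c ∈ maximalIdeal O) (hdet : IsUnit (a * d - b * c)) : IsUnit (normForm t n a b) := by
  by_contra hQ
  have hQm : normForm t n a b ∈ maximalIdeal O := (mem_maximalIdeal _).mpr hQ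
  have ha2 : a ^ 2 ∈ maximalIdeal O := by
    have h : a ^ 2 = normForm t n a b - (t * (a * b) + n * b ^ 2) := by unfold normForm; ring
    rw [h]
    exact Ideal.sub_mem _ hQm
      (Ideal.add_mem _ (Ideal.mul_mem_right _ _ ht) (Ideal.mul_mem_right _ _ hn))
  have ha : a ∈ maximalIdeal O := (maximalIdeal.isMaximal O).isPrime.mem_of_pow_mem 2 ha2
  exact (mem_maximalIdeal _).mp
    (Ideal.sub_mem _ (Ideal.mul_mem_right _ _ ha) (Ideal.mul_mem_left _ _ hc)) hdet

theorem isUnit_normForm_of_irreducible_map_residue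
    (hirr : Irreducible ((X ^ 2 - C t * X + C n).map (residue O)))
    (hdet : IsUnit (a * d - b * c)) : IsUnit (normForm t n a b) := by
  by_contra hQ
  have hQ0 : normForm (residue O t) (residue O n) (residue O a) (residue O b) = 0 := by
    simpa [normForm] using (residue_eq_zero_iff _).mpr ((mem_maximalIdeal _).mpr hQ)
  have hmap : (X ^ 2 - C t * X + C n).map (residue O)
      = X ^ 2 - C (residue O t) * X + C (residue O n) := by
    simp
  obtain ⟨ha, hb⟩ := eq_zero_of_normForm_eq_zero (hmap ▸ hirr) hQ0
  have hdet' := hdet.map (residue O)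
  simp [ha, hb] at hdet'

end LocalRing

section Factorization

variable {R : Type*} [CommRing R] {t n : R}

theorem isUnit_torus_of_isUnit_normForm {a b : R} (hQ : IsUnit (normForm t n a b)) :
    IsUnit (!![a, b; -(n * b), a + t * b] : Matrix (Fin 2) (Fin 2) R) := by
  rw [Matrix.isUnit_iff_isUnit_det, Matrix.det_fin_two_of]
  convert hQ using 1
  unfold normForm
  ring

theorem existsUnique_lower_mul_torus {I : Ideal R} (hn : n ∈ I) (g : Matrix (Fin 2) (Fin 2) R)
    (hdet : IsUnit g.det) (hg : g 1 0 ∈ I) (hQ : IsUnit (normForm t n (g 0 0) (g 0 1))) :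
    ∃! lh : Matrix (Fin 2) (Fin 2) R × Matrix (Fin 2) (Fin 2) R,
      (∃ c d : R, lh.1 = !![1, 0; c, d] ∧ c ∈ I ∧ IsUnit d) ∧
      (∃ a b : R, lh.2 = !![a, b; -(n * b), a + t * b] ∧ IsUnit (normForm t n a b)) ∧
      g = lh.1 * lh.2 := by
  obtain ⟨e, he⟩ : ∃ e, normForm t n (g 0 0) (g 0 1) * e = 1 := hQ.exists_right_inv
  unfold normForm at he
  rw [Matrix.det_fin_two] at hdet
  -- `l = g h⁻¹` with `h⁻¹ = e • adjugate h`
  set c₀ := ((g 0 0 + t * g 0 1) * g 1 0 + n * (g 0 1 * g 1 1)) * e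
  set d₀ := (g 0 0 * g 1 1 - g 0 1 * g 1 0) * e
  have hfac : g = !![1, 0; c₀, d₀] * !![g 0 0, g 0 1; -(n * g 0 1), g 0 0 + t * g 0 1] := by
    ext i j
    fin_cases i <;> fin_cases j <;> simp [c₀, d₀]
    · linear_combination (-g 1 0) * he
    · linear_combination (-g 1 1) * he
  have hc₀ : c₀ ∈ I := Ideal.mul_mem_right _ _ <|
    Ideal.add_mem _ (Ideal.mul_mem_left _ _ hg) (Ideal.mul_mem_right _ _ hn)
  have hd₀ : IsUnit d₀ := hdet.mul (.of_mul_eq_one_right _ he)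
  refine ⟨(_, _), ⟨⟨c₀, d₀, rfl, hc₀, hd₀⟩, ⟨_, _, rfl, hQ⟩, hfac⟩, ?_⟩
  rintro ⟨l, h⟩ ⟨⟨c, d, rfl, -, -⟩, ⟨a, b, rfl, -⟩, hgl⟩
  obtain rfl : g 0 0 = a := by simpa using congrFun₂ hgl 0 0
  obtain rfl : g 0 1 = b := by simpa using congrFun₂ hgl 0 1
  exact Prod.ext ((isUnit_torus_of_isUnit_normForm hQ).mul_right_cancel (hgl.symm.trans hfac)) rfl

end Factorization

/-- Let `O` be a DVR with maximal ideal `m` and uniformizer `π`, let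
`u ≥ 0`, `t n ∈ O` with `n ∈ πᵘO`, and assume either (i) `u ≥ 1` and `t ∈ m`, or (ii) the
reduction of `X² − tX + n` mod `m` is irreducible over the residue field.  Then every
`g ∈ GL₂(O)` whose `(2,1)`-entry lies in `πᵘO` factors uniquely as `g = l·h` with
`l = [[1,0],[c,d]]`, `c ∈ πᵘO`, `d ∈ O×`, and `h = [[a,b],[−nb, a+tb]]` with
`a² + tab + nb² ∈ O×`. -/
theorem stmt3 (O : Type*) [CommRing O] [IsDomain O] [IsDiscreteValuationRing O]
    (π : O) (hπ : Irreducible π) (u : ℕ) (t n : O)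
    (hn : n ∈ Ideal.span {π ^ u})
    (hcase : (1 ≤ u ∧ t ∈ IsLocalRing.maximalIdeal O) ∨
      Irreducible ((X ^ 2 - C t * X + C n).map (IsLocalRing.residue O))) :
    ∀ g : GL (Fin 2) O, (g : Matrix (Fin 2) (Fin 2) O) 1 0 ∈ Ideal.span {π ^ u} →
      ∃! lh : Matrix (Fin 2) (Fin 2) O × Matrix (Fin 2) (Fin 2) O,
        (∃ c d : O, lh.1 = !![1, 0; c, d] ∧ c ∈ Ideal.span {π ^ u} ∧ IsUnit d) ∧
        (∃ a b : O, lh.2 = !![a, b; -(n * b), a + t * b] ∧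
          IsUnit (a ^ 2 + t * a * b + n * b ^ 2)) ∧
        (g : Matrix (Fin 2) (Fin 2) O) = lh.1 * lh.2 := by
  intro g hg
  have hdet : IsUnit (g : Matrix (Fin 2) (Fin 2) O).det :=
    (Matrix.isUnit_iff_isUnit_det _).mp g.isUnit
  have hdet' : IsUnit (g 0 0 * g 1 1 - g 0 1 * g 1 0 : O) := by rwa [← Matrix.det_fin_two]
  have hQ : IsUnit (normForm t n (g 0 0) (g 0 1) : O) := by
    rcases hcase with ⟨hu, ht⟩ | hirr
    · have hle : Ideal.span {π ^ u} ≤ maximalIdeal O :=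
        (Ideal.span_singleton_le_iff_mem _).mpr <|
          Ideal.pow_mem_of_mem _ ((mem_maximalIdeal _).mpr hπ.not_isUnit) u hu
      exact isUnit_normForm_of_mem_maximalIdeal ht (hle hn) (hle hg) hdet'
    · exact isUnit_normForm_of_irreducible_map_residue hirr hdet'
  exact existsUnique_lower_mul_torus hn _ hdet hg hQ
end

section
/- Let a, b be central elements of D, let γ₋ ∈ D satisfy γ₋μ = μ̄γ₋, and set γ₊ := a + bμ, γ := γ₊ + γ₋, and γ̄ := a + bμ̄ − γ₋. Then γ·(μ − μ̄)·γ₋ = (μ − μ̄)·γ₋·γ̄. Consequently, if v is a multiplicative absolute value on D and γ₋ ≠ 0, then v(γ̄) = v(γ). -/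
/-!
Write `δ = μ - μ̄`. Since `t` is central, `μ` commutes with `δ`, and the twisted commutation
`γ₋ μ = μ̄ γ₋` gives `γ₋ μ̄ = μ γ₋`, so `γ₋` anticommutes with `δ`. Moving `δ γ₋` across `γ`
term by term therefore turns `a + bμ + γ₋` into `a + bμ̄ - γ₋`, i.e. `γ` and `γ̄` are conjugate
by the unit `δ γ₋`, and a multiplicative absolute value cannot distinguish conjugates.
-/

section TwistedCommutation

variable {R : Type*} [Ring R] {t μ γ : R}

theorem mul_sub_eq_mul_of_mul_eq (ht : t ∈ Subring.center R) (h : γ * μ = (t - μ) * γ) :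
    γ * (t - μ) = μ * γ := by
  rw [mul_sub, h, Subring.mem_center_iff.mp ht γ]
  noncomm_ring

theorem mul_sub_sub_eq_neg_of_mul_eq (ht : t ∈ Subring.center R) (h : γ * μ = (t - μ) * γ) :
    γ * (μ - (t - μ)) = -((μ - (t - μ)) * γ) := by
  rw [mul_sub, h, mul_sub_eq_mul_of_mul_eq ht h]
  noncomm_ring

theorem add_mul_add_mul_eq_mul_add_mul_sub {a b : R} (ht : t ∈ Subring.center R)
    (ha : a ∈ Subring.center R) (hb : b ∈ Subring.center R) (h : γ * μ = (t - μ) * γ) :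
    (a + b * μ + γ) * ((μ - (t - μ)) * γ) = (μ - (t - μ)) * γ * (a + b * (t - μ) - γ) := by
  have hγδ := mul_sub_sub_eq_neg_of_mul_eq ht h
  have hγμbar := mul_sub_eq_mul_of_mul_eq ht h
  set δ := μ - (t - μ)
  have hμδ : μ * δ = δ * μ := by
    simp only [δ, mul_sub, sub_mul, Subring.mem_center_iff.mp ht μ]
  have ha' := Subring.mem_center_iff.mp ha
  have hb' := Subring.mem_center_iff.mp hb
  calc (a + b * μ + γ) * (δ * γ) = a * (δ * γ) + b * (μ * δ * γ) + γ * δ * γ := by noncomm_ring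
    _ = δ * γ * a + b * (δ * (γ * (t - μ))) - δ * γ * γ := by
      rw [← ha', hμδ, hγδ, hγμbar]
      noncomm_ring
    _ = δ * γ * a + δ * γ * (t - μ) * b - δ * γ * γ := by
      rw [← hb' (δ * (γ * (t - μ)))]
      noncomm_ring
    _ = δ * γ * (a + b * (t - μ) - γ) := by
      rw [mul_assoc (δ * γ) (t - μ) b, hb' (t - μ)]
      noncomm_ring

end TwistedCommutation

theorem map_eq_of_mul_eq_mul {R M₀ : Type*} [Mul R] [CommMonoidWithZero M₀]
    [IsLeftCancelMulZero M₀] {v : R → M₀}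
    (hv : ∀ x y, v (x * y) = v x * v y) {x y c : R} (hc : v c ≠ 0) (h : x * c = c * y) :
    v y = v x := by
  have := congrArg v h
  rw [hv, hv, mul_comm] at this
  exact (mul_left_cancel₀ hc this).symm

theorem stmt8_general (D : Type*) [DivisionRing D] (t : D)
    (ht : t ∈ Subring.center D)
    (μ : D) (hne : t - μ ≠ μ)
    (a b : D) (ha : a ∈ Subring.center D) (hb : b ∈ Subring.center D)
    (γm : D) (hγm : γm * μ = (t - μ) * γm) :
    (a + b * μ + γm) * ((μ - (t - μ)) * γm) =
      (μ - (t - μ)) * γm * (a + b * (t - μ) - γm) ∧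
    ∀ v : D → ℝ, (∀ x : D, v x = 0 ↔ x = 0) → (∀ x y : D, v (x * y) = v x * v y) →
      γm ≠ 0 → v (a + b * (t - μ) - γm) = v (a + b * μ + γm) := by
  have key := add_mul_add_mul_eq_mul_add_mul_sub ht ha hb hγm
  refine ⟨key, fun v hv0 hv hγ => map_eq_of_mul_eq_mul hv ?_ key⟩
  exact mt (hv0 _).mp (mul_ne_zero (sub_ne_zero.mpr hne.symm) hγ)

/-- Let `D` be a division ring, `t n` central, `μ² = tμ − n`,
`μ̄ := t − μ ≠ μ`.  Let `a b` be central, `γ₋` satisfy `γ₋μ = μ̄γ₋`, and set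
`γ₊ := a + bμ`, `γ := γ₊ + γ₋`, `γ̄ := a + bμ̄ − γ₋`.  Then
`γ·(μ − μ̄)·γ₋ = (μ − μ̄)·γ₋·γ̄`; consequently, if `v` is a multiplicative absolute value
on `D` and `γ₋ ≠ 0`, then `v(γ̄) = v(γ)`. -/
theorem stmt8 (D : Type*) [DivisionRing D] (t n : D)
    (ht : t ∈ Subring.center D) (hn : n ∈ Subring.center D)
    (μ : D) (hμ : μ ^ 2 = t * μ - n) (hne : t - μ ≠ μ)
    (a b : D) (ha : a ∈ Subring.center D) (hb : b ∈ Subring.center D)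
    (γm : D) (hγm : γm * μ = (t - μ) * γm) :
    (a + b * μ + γm) * ((μ - (t - μ)) * γm) =
      (μ - (t - μ)) * γm * (a + b * (t - μ) - γm) ∧
    ∀ v : D → ℝ, (∀ x : D, v x = 0 ↔ x = 0) → (∀ x y : D, v (x * y) = v x * v y) →
      γm ≠ 0 → v (a + b * (t - μ) - γm) = v (a + b * μ + γm) :=
  stmt8_general D t ht μ hne a b ha hb γm hγm
end

section
/- The normalizer of K× in D× equals (D⁺ ∪ D⁻) ∖ {0}: a nonzero γ ∈ D satisfies γkγ⁻¹ ∈ K for all nonzero k ∈ K if and only if γμ = μγ or γμ = μ̄γ. -/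
/-!
The relation `γ * x = y * γ` (`SemiconjBy γ x y`) is compatible with the `F`-algebra operations,
so `γ μ γ⁻¹` is again a root of `X² - tX + n`. If it lies in `K` it commutes with `μ`, and two
commuting roots `x, μ` satisfy `(x - μ)(x - μ̄) = 0`, so `x = μ` or `x = μ̄` in a division ring.
Conversely, `γ μ = ν γ` gives `γ (a + bμ) = (a + bν) γ`, and `a + bμ̄ = (a + bt) - bμ` lies in `K`.
-/

namespace SemiconjBy

variable {F D : Type*} [CommSemiring F]

theorem algebraMap_add_algebraMap_mul [Semiring D] [Algebra F D] {γ μ ν : D}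
    (h : SemiconjBy γ μ ν) (a b : F) :
    SemiconjBy γ (algebraMap F D a + algebraMap F D b * μ)
      (algebraMap F D a + algebraMap F D b * ν) :=
  .add_right (Algebra.commute_algebraMap_right a γ)
    (.mul_right (Algebra.commute_algebraMap_right b γ) h)

theorem sq_eq_algebraMap_mul_sub [Ring D] [NoZeroDivisors D] [Algebra F D] {γ μ x : D} {t n : F}
    (hγ : γ ≠ 0) (h : SemiconjBy γ μ x) (hμ : μ ^ 2 = algebraMap F D t * μ - algebraMap F D n) :
    x ^ 2 = algebraMap F D t * x - algebraMap F D n := by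
  have hq := (h.pow_right 2).sub_right
    (.sub_right (.mul_right (Algebra.commute_algebraMap_right t γ) h)
      (Algebra.commute_algebraMap_right n γ))
  rw [hμ, sub_self, SemiconjBy, mul_zero, eq_comm, mul_eq_zero] at hq
  exact sub_eq_zero.mp (hq.resolve_right hγ)

end SemiconjBy

theorem Commute.eq_or_eq_algebraMap_sub_of_sq_eq {F D : Type*} [CommSemiring F] [Ring D]
    [NoZeroDivisors D] [Algebra F D] {x μ : D} {t n : F} (hc : Commute x μ)
    (hx : x ^ 2 = algebraMap F D t * x - algebraMap F D n)
    (hμ : μ ^ 2 = algebraMap F D t * μ - algebraMap F D n) :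
    x = μ ∨ x = algebraMap F D t - μ := by
  have hprod : (x - μ) * (x - (algebraMap F D t - μ)) = 0 := calc
    _ = x ^ 2 - x * algebraMap F D t + (x * μ - μ * x) + μ * algebraMap F D t - μ ^ 2 := by
      noncomm_ring
    _ = 0 := by
      rw [hx, hμ, hc.eq, sub_self, ← Algebra.commutes t x, ← Algebra.commutes t μ]
      abel
  rcases mul_eq_zero.mp hprod with h | h
  · exact .inl (sub_eq_zero.mp h)
  · exact .inr (sub_eq_zero.mp h)

theorem stmt10_general (F : Type*) [Field F] (D : Type*) [DivisionRing D] [Algebra F D]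
    (t n : F) (μ : D)
    (hμ : μ ^ 2 = algebraMap F D t * μ - algebraMap F D n) :
    ∀ γ : D, γ ≠ 0 →
      ((∀ k : D, (∃ a b : F, k = algebraMap F D a + algebraMap F D b * μ) → k ≠ 0 →
          ∃ a b : F, γ * k * γ⁻¹ = algebraMap F D a + algebraMap F D b * μ) ↔
        (γ * μ = μ * γ ∨ γ * μ = (algebraMap F D t - μ) * γ)) := by
  intro γ hγ
  have conj_eq {x y : D} : γ * x * γ⁻¹ = y ↔ SemiconjBy γ x y := mul_inv_eq_iff_eq_mul₀ hγ
  constructor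
  · intro h
    by_cases hμ0 : μ = 0
    · simp [hμ0]
    obtain ⟨a, b, hab⟩ := h μ ⟨0, 1, by simp⟩ hμ0
    have hsc : SemiconjBy γ μ (γ * μ * γ⁻¹) := conj_eq.mp rfl
    have hc : Commute (γ * μ * γ⁻¹) μ :=
      hab ▸ ((Commute.refl μ).algebraMap_add_algebraMap_mul a b).symm
    rcases hc.eq_or_eq_algebraMap_sub_of_sq_eq (hsc.sq_eq_algebraMap_mul_sub hγ hμ) hμ with h | h
    · rw [h] at hsc
      exact .inl hsc
    · rw [h] at hsc
      exact .inr hsc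
  · rintro h k ⟨a, b, rfl⟩ -
    rcases h with h | h
    · exact ⟨a, b, conj_eq.mpr (SemiconjBy.algebraMap_add_algebraMap_mul h a b)⟩
    · refine ⟨a + b * t, -b, conj_eq.mpr ?_⟩
      convert SemiconjBy.algebraMap_add_algebraMap_mul h a b using 1
      simp only [map_add, map_mul, map_neg]
      noncomm_ring

/-- Let `F` be a field, `D` a division ring that is an `F`-algebra,
`t n ∈ F`, `μ ∈ D` with `μ² = tμ − n·1`, `μ̄ := t·1 − μ ≠ μ`, and `K := F·1 + F·μ`.
The normalizer of `K×` in `D×` equals `(D⁺ ∪ D⁻) ∖ {0}`: a nonzero `γ ∈ D` satisfies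
`γkγ⁻¹ ∈ K` for all nonzero `k ∈ K` if and only if `γμ = μγ` or `γμ = μ̄γ`. -/
theorem stmt10 (F : Type*) [Field F] (D : Type*) [DivisionRing D] [Algebra F D]
    (t n : F) (μ : D)
    (hμ : μ ^ 2 = algebraMap F D t * μ - algebraMap F D n)
    (hne : algebraMap F D t - μ ≠ μ) :
    ∀ γ : D, γ ≠ 0 →
      ((∀ k : D, (∃ a b : F, k = algebraMap F D a + algebraMap F D b * μ) → k ≠ 0 →
          ∃ a b : F, γ * k * γ⁻¹ = algebraMap F D a + algebraMap F D b * μ) ↔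
        (γ * μ = μ * γ ∨ γ * μ = (algebraMap F D t - μ) * γ)) :=
  stmt10_general F D t n μ hμ
end
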